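/- Let v ∈ ℝ³ with 0 < |v| < 1 be fixed, and for ω ∈ S² set z = ω·v. Suppose ξ(ω) = ζ(z) ω × (ω × v) for a C¹ function ζ. Then the condition ∂̸_ω · ξ = 1 on S² (away from ω parallel to v) is equivalent to the ODE ζ'(z)(z² − |v|²) + 2z ζ(z) = 1, whose general solution is ζ(z) = (C − z)/(|v|² − z²) for a constant C. -/

import Mathlib

/-!
Since `ω × (ω × v) = (ω·v) ω − |ω|² v`, the field `ξ` has an explicit Jacobian `J`, and
`∂̸_ω · ξ = tr J − ω · J ω`. On the unit sphere `ω · J ω = 0` and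
`tr J = ζ'(z)(z² − |v|²) + 2 z ζ(z)` with `z = ω·v`. The values `z = ω·v` with `ω` a unit vector
not parallel to `v` are exactly those with `z² < |v|²`, so the divergence condition is the ODE on
`(−|v|, |v|)`. The ODE says that `ζ(z)(|v|² − z²) + z` has zero derivative there, i.e. equals a
constant `C`.
-/

section DotProduct

variable {ι : Type*} [Fintype ι]

theorem HasFDerivAt.dotProduct {E : Type*} [NormedAddCommGroup E] [NormedSpace ℝ E]
    {f g : E → ι → ℝ} {f' g' : E →L[ℝ] ι → ℝ} {x : E}
    (hf : HasFDerivAt f f' x) (hg : HasFDerivAt g g' x) :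
    ∃ L : E →L[ℝ] ℝ, HasFDerivAt (fun y => f y ⬝ᵥ g y) L x ∧
      ∀ h, L h = f' h ⬝ᵥ g x + f x ⬝ᵥ g' h := by
  refine ⟨_, .fun_sum fun i _ => (hasFDerivAt_pi'.1 hf i).mul (hasFDerivAt_pi'.1 hg i),
    fun h => ?_⟩
  simp only [sum_apply, add_apply, smul_apply, ContinuousLinearMap.comp_apply, smul_eq_mul,
    Finset.sum_add_distrib]
  rw [add_comm, dotProduct_comm (f' h)]
  rfl

theorem dotProduct_self_pos_iff {u : ι → ℝ} : 0 < u ⬝ᵥ u ↔ u ≠ 0 := by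
  simpa using Matrix.dotProduct_self_star_pos_iff (v := u)

theorem exists_dotProduct_self_eq_one_dotProduct_eq [Nontrivial ι] {v : ι → ℝ} {z : ℝ}
    (hz : z ^ 2 < v ⬝ᵥ v) : ∃ ω, ω ⬝ᵥ ω = 1 ∧ ω ⬝ᵥ v = z := by
  obtain ⟨u, hu, huv⟩ := exists_ne_zero_dotProduct_eq_zero v
  have hv : 0 < v ⬝ᵥ v := (sq_nonneg z).trans_lt hz
  have hu : 0 < u ⬝ᵥ u := dotProduct_self_pos_iff.2 hu
  set c := √((v ⬝ᵥ v - z ^ 2) / (v ⬝ᵥ v * u ⬝ᵥ u))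
  have hc : v ⬝ᵥ v * u ⬝ᵥ u * c ^ 2 = v ⬝ᵥ v - z ^ 2 := by
    rw [Real.sq_sqrt (div_nonneg (by linarith) (by positivity))]
    field_simp
  refine ⟨(z / v ⬝ᵥ v) • v + c • u, ?_, ?_⟩
  · simp only [add_dotProduct, dotProduct_add, smul_dotProduct, dotProduct_smul, smul_eq_mul, huv,
      dotProduct_comm v u]
    field_simp
    linear_combination hc
  · simp only [add_dotProduct, smul_dotProduct, smul_eq_mul, huv]
    field_simp
    ring

end DotProduct

theorem crossProduct_ne_zero_iff_sq_dotProduct_lt {ω v : Fin 3 → ℝ} (hω : ω ⬝ᵥ ω = 1) :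
    crossProduct ω v ≠ 0 ↔ (ω ⬝ᵥ v) ^ 2 < v ⬝ᵥ v := by
  rw [← dotProduct_self_pos_iff, cross_dot_cross, hω, dotProduct_comm v ω]
  constructor <;> intro h <;> nlinarith

section AnsatzField

variable {ι : Type*} [Fintype ι]

-- `ζ(w·v) w × (w × v)`, with the triple product expanded so that it makes sense in any dimension.
def ansatzField (ζ : ℝ → ℝ) (v w : ι → ℝ) : ι → ℝ :=
  ζ (w ⬝ᵥ v) • ((w ⬝ᵥ v) • w - (w ⬝ᵥ w) • v)

theorem hasFDerivAt_ansatzField {ζ : ℝ → ℝ} {v ω : ι → ℝ}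
    (hζ : DifferentiableAt ℝ ζ (ω ⬝ᵥ v)) :
    ∃ ξ' : (ι → ℝ) →L[ℝ] ι → ℝ, HasFDerivAt (ansatzField ζ v) ξ' ω ∧
      ∀ h, ξ' h = ζ (ω ⬝ᵥ v) • ((ω ⬝ᵥ v) • h + (h ⬝ᵥ v) • ω - (2 * (ω ⬝ᵥ h)) • v) +
        (deriv ζ (ω ⬝ᵥ v) * (h ⬝ᵥ v)) • ((ω ⬝ᵥ v) • ω - (ω ⬝ᵥ ω) • v) := by
  obtain ⟨Lv, hLv, hLv_apply⟩ := (hasFDerivAt_id ω).dotProduct (hasFDerivAt_const v ω)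
  obtain ⟨Lω, hLω, hLω_apply⟩ := (hasFDerivAt_id ω).dotProduct (hasFDerivAt_id ω)
  refine ⟨_, (hζ.hasDerivAt.comp_hasFDerivAt ω hLv).smul
    ((hLv.smul (hasFDerivAt_id ω)).sub (hLω.smul_const v)), fun h => ?_⟩
  simp only [add_apply, smul_apply, ContinuousLinearMap.smulRight_apply, sub_apply, hLv_apply,
    hLω_apply, ContinuousLinearMap.id_apply, zero_apply, dotProduct_zero, id_eq,
    Function.comp_apply, add_zero, dotProduct_comm h ω, smul_eq_mul]
  module

variable [DecidableEq ι]

noncomputable def tangentialDiv (ξ : (ι → ℝ) → ι → ℝ) (ω : ι → ℝ) : ℝ :=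
  ∑ i, ∑ j, ((if i = j then (1 : ℝ) else 0) - ω i * ω j) *
    fderiv ℝ (fun w => ξ w i) ω (Pi.single j 1)

theorem tangentialDiv_eq_of_hasFDerivAt {ξ : (ι → ℝ) → ι → ℝ} {ξ' : (ι → ℝ) →L[ℝ] ι → ℝ}
    {ω : ι → ℝ} (hξ : HasFDerivAt ξ ξ' ω) :
    tangentialDiv ξ ω = ∑ i, ξ' (Pi.single i 1) i - ω ⬝ᵥ ξ' ω := by
  have hξω : ξ' ω = ∑ j, ω j • ξ' (Pi.single j 1) := by
    conv_lhs => rw [← Finset.univ_sum_single ω]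
    simp only [map_sum]
    refine Finset.sum_congr rfl fun j _ => ?_
    rw [← map_smul, ← Pi.single_smul, smul_eq_mul, mul_one]
  simp only [tangentialDiv, fun i => (hasFDerivAt_pi'.1 hξ i).fderiv,
    ContinuousLinearMap.comp_apply, ContinuousLinearMap.proj_apply, sub_mul, ite_mul, one_mul,
    zero_mul, Finset.sum_sub_distrib, Finset.sum_ite_eq, Finset.mem_univ, if_true, mul_assoc,
    ← Finset.mul_sum, hξω, Finset.sum_apply, Pi.smul_apply, smul_eq_mul, dotProduct]

theorem tangentialDiv_ansatzField {ζ : ℝ → ℝ} {v ω : ι → ℝ}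
    (hζ : DifferentiableAt ℝ ζ (ω ⬝ᵥ v)) (hω : ω ⬝ᵥ ω = 1) :
    tangentialDiv (ansatzField ζ v) ω = deriv ζ (ω ⬝ᵥ v) * ((ω ⬝ᵥ v) ^ 2 - v ⬝ᵥ v) +
      (Fintype.card ι - 1) * (ω ⬝ᵥ v) * ζ (ω ⬝ᵥ v) := by
  obtain ⟨ξ', hξ, hξ'⟩ := hasFDerivAt_ansatzField hζ
  have hnormal : ω ⬝ᵥ ξ' ω = 0 := by
    simp only [hξ', dotProduct_add, dotProduct_sub, dotProduct_smul, smul_eq_mul, hω]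
    ring
  set z := ω ⬝ᵥ v
  have htrace : ∑ i, ξ' (Pi.single i 1) i =
      deriv ζ z * (z ^ 2 - v ⬝ᵥ v) + (Fintype.card ι - 1) * z * ζ z := by
    simp only [hξ', hω, single_dotProduct, dotProduct_single, one_mul, mul_one, Pi.add_apply,
      Pi.sub_apply, Pi.smul_apply, smul_eq_mul, Pi.single_eq_same]
    calc _ = ∑ i, (ζ z * z + (deriv ζ z * z - ζ z) * (ω i * v i) - deriv ζ z * (v i * v i)) :=
          Finset.sum_congr rfl fun i _ => by ring
      _ = Fintype.card ι * (ζ z * z) + (deriv ζ z * z - ζ z) * z - deriv ζ z * (v ⬝ᵥ v) := by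
          simp only [z, Finset.sum_add_distrib, Finset.sum_sub_distrib, ← Finset.mul_sum,
            Finset.sum_const, Finset.card_univ, nsmul_eq_mul, dotProduct]
          ring
      _ = _ := by ring
  rw [tangentialDiv_eq_of_hasFDerivAt hξ, htrace, hnormal, sub_zero]

end AnsatzField

theorem IsOpen.exists_eq_const_iff_eqOn_deriv_zero {𝕜 G : Type*} [RCLike 𝕜]
    [NormedAddCommGroup G] [NormedSpace 𝕜 G] {f : 𝕜 → G} {s : Set 𝕜} (hs : IsOpen s)
    (hs' : IsPreconnected s) (hf : DifferentiableOn 𝕜 f s) :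
    (∃ C, ∀ x ∈ s, f x = C) ↔ s.EqOn (deriv f) 0 := by
  refine ⟨fun ⟨C, hC⟩ x hx => ?_, hs.exists_is_const_of_deriv_eq_zero hs' hf⟩
  have hfC : f =ᶠ[nhds x] fun _ => C := Filter.eventually_of_mem (hs.mem_nhds hx) hC
  rw [hfC.deriv_eq, deriv_const, Pi.zero_apply]

theorem ode_iff_eq_div {ζ : ℝ → ℝ} (hζ : Differentiable ℝ ζ) {m : ℝ} {s : Set ℝ}
    (hs : IsOpen s) (hs' : IsPreconnected s) (hm : ∀ z ∈ s, z ^ 2 ≠ m) :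
    (∀ z ∈ s, deriv ζ z * (z ^ 2 - m) + 2 * z * ζ z = 1) ↔
      ∃ C, ∀ z ∈ s, ζ z = (C - z) / (m - z ^ 2) := by
  set g : ℝ → ℝ := fun t => ζ t * (m - t ^ 2) + t
  have hg : ∀ t, HasDerivAt g (1 - (deriv ζ t * (t ^ 2 - m) + 2 * t * ζ t)) t := fun t =>
    (((hζ t).hasDerivAt.fun_mul ((hasDerivAt_pow 2 t).const_sub m)).fun_add
      (hasDerivAt_id' t)).congr_deriv (by norm_num; ring)
  have hg_const : (∃ C, ∀ z ∈ s, g z = C) ↔ ∃ C, ∀ z ∈ s, ζ z = (C - z) / (m - z ^ 2) := by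
    refine exists_congr fun C => forall₂_congr fun z hz => ?_
    rw [eq_div_iff (sub_ne_zero.2 (hm z hz).symm)]
    constructor <;> intro h <;> linarith
  rw [← hg_const, hs.exists_eq_const_iff_eqOn_deriv_zero hs'
    fun t _ => (hg t).differentiableAt.differentiableWithinAt]
  refine forall₂_congr fun z _ => ?_
  rw [(hg z).deriv, Pi.zero_apply, sub_eq_zero, eq_comm]

theorem xi_ansatz_ode_general (v : Fin 3 → ℝ) (ζ : ℝ → ℝ) (hζ : ContDiff ℝ 1 ζ) :
    let nv : ℝ := Real.sqrt (∑ i, v i ^ 2)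
    let ξ : (Fin 3 → ℝ) → Fin 3 → ℝ := fun w =>
      ζ (∑ i, w i * v i) • crossProduct w (crossProduct w v)
    ((∀ ω : Fin 3 → ℝ, (∑ i, ω i ^ 2 = 1) → crossProduct ω v ≠ 0 →
        (∑ i, ∑ j, ((if i = j then (1 : ℝ) else 0) - ω i * ω j) *
          fderiv ℝ (fun w => ξ w i) ω (Pi.single j 1)) = 1) ↔
      (∀ z ∈ Set.Ioo (-nv) nv, deriv ζ z * (z ^ 2 - ∑ i, v i ^ 2) + 2 * z * ζ z = 1)) ∧
    ((∀ z ∈ Set.Ioo (-nv) nv, deriv ζ z * (z ^ 2 - ∑ i, v i ^ 2) + 2 * z * ζ z = 1) ↔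
      ∃ C : ℝ, ∀ z ∈ Set.Ioo (-nv) nv, ζ z = (C - z) / ((∑ i, v i ^ 2) - z ^ 2)) := by
  intro nv ξ
  have hsq : ∀ u : Fin 3 → ℝ, ∑ i, u i ^ 2 = u ⬝ᵥ u := fun u => by simp [dotProduct, sq]
  have hmem : ∀ z, z ∈ Set.Ioo (-nv) nv ↔ z ^ 2 < v ⬝ᵥ v := fun z => by
    rw [← hsq]; exact Real.sq_lt.symm
  have hξ : ξ = ansatzField ζ v := funext fun w => by
    change ζ (w ⬝ᵥ v) • _ = _
    rw [cross_cross_eq_smul_sub_smul']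
    rfl
  have hdiv : ∀ ω, ω ⬝ᵥ ω = 1 → tangentialDiv ξ ω =
      deriv ζ (ω ⬝ᵥ v) * ((ω ⬝ᵥ v) ^ 2 - v ⬝ᵥ v) + 2 * (ω ⬝ᵥ v) * ζ (ω ⬝ᵥ v) := fun ω hω => by
    rw [hξ, tangentialDiv_ansatzField ((hζ.differentiable one_ne_zero) _) hω]
    norm_num
  rw [hsq v]
  refine ⟨⟨fun h z hz => ?_, fun h ω hω hωv => ?_⟩,
    ode_iff_eq_div (hζ.differentiable one_ne_zero) isOpen_Ioo isPreconnected_Ioo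
      fun z hz => ((hmem z).1 hz).ne⟩
  · obtain ⟨ω, hω, rfl⟩ := exists_dotProduct_self_eq_one_dotProduct_eq ((hmem z).1 hz)
    rw [← hdiv ω hω]
    exact h ω (hsq ω ▸ hω) ((crossProduct_ne_zero_iff_sq_dotProduct_lt hω).2 ((hmem _).1 hz))
  · rw [hsq] at hω
    change tangentialDiv ξ ω = 1
    rw [hdiv ω hω]
    exact h _ ((hmem _).2 ((crossProduct_ne_zero_iff_sq_dotProduct_lt hω).1 hωv))

/-- For `ξ(ω) = ζ(ω·v) ω × (ω × v)`, the condition `∂̸_ω · ξ = 1` on the unit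
sphere (away from `ω` parallel to `v`) is equivalent to the ODE
`ζ'(z)(z² − |v|²) + 2z ζ(z) = 1` on `(−|v|,|v|)`, whose general solution is
`ζ(z) = (C − z)/(|v|² − z²)`. -/
theorem xi_ansatz_ode (v : Fin 3 → ℝ) (hv0 : 0 < ∑ i, v i ^ 2)
    (hv1 : ∑ i, v i ^ 2 < 1) (ζ : ℝ → ℝ) (hζ : ContDiff ℝ 1 ζ) :
    let nv : ℝ := Real.sqrt (∑ i, v i ^ 2)
    let ξ : (Fin 3 → ℝ) → Fin 3 → ℝ := fun w =>
      ζ (∑ i, w i * v i) • crossProduct w (crossProduct w v)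
    ((∀ ω : Fin 3 → ℝ, (∑ i, ω i ^ 2 = 1) → crossProduct ω v ≠ 0 →
        (∑ i, ∑ j, ((if i = j then (1 : ℝ) else 0) - ω i * ω j) *
          fderiv ℝ (fun w => ξ w i) ω (Pi.single j 1)) = 1) ↔
      (∀ z ∈ Set.Ioo (-nv) nv, deriv ζ z * (z ^ 2 - ∑ i, v i ^ 2) + 2 * z * ζ z = 1)) ∧
    ((∀ z ∈ Set.Ioo (-nv) nv, deriv ζ z * (z ^ 2 - ∑ i, v i ^ 2) + 2 * z * ζ z = 1) ↔
      ∃ C : ℝ, ∀ z ∈ Set.Ioo (-nv) nv, ζ z = (C - z) / ((∑ i, v i ^ 2) - z ^ 2)) :=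
  xi_ansatz_ode_general v ζ hζ
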